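/- (Concatenation of three J-gates gives an Euler-form unitary.) For all real numbers θ, ζ, ξ, the matrices J_φ := H * exp((φ * i) • Z) satisfy J_ξ * J_ζ * J_θ = H * exp((ξ * i) • Z) * exp((ζ * i) • X) * exp((θ * i) • Z). -/

import Mathlib

noncomputable section

open Matrix

/-- The Pauli `X` matrix. -/
def Xm : Matrix (Fin 2) (Fin 2) ℂ := !![0, 1; 1, 0]

/-- The Pauli `Z` matrix. -/
def Zm : Matrix (Fin 2) (Fin 2) ℂ := !![1, 0; 0, -1]

/-- The Hadamard matrix `2^{-1/2} (1 1; 1 -1)`. -/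
def Hm : Matrix (Fin 2) (Fin 2) ℂ :=
  (((2 : ℝ) ^ (-(1 : ℝ) / 2) : ℝ) : ℂ) • !![1, 1; 1, -1]

/-- The one-way-model gate `J_φ = H e^{iφZ}`. -/
def Jgate (φ : ℝ) : Matrix (Fin 2) (Fin 2) ℂ :=
  Hm * NormedSpace.exp (((φ : ℂ) * Complex.I) • Zm)

lemma hc2 : (((2 : ℝ) ^ (-(1 : ℝ) / 2) : ℝ) : ℂ) * (((2 : ℝ) ^ (-(1 : ℝ) / 2) : ℝ) : ℂ) = 2⁻¹ := by
  rw [← Complex.ofReal_mul, ← Real.rpow_add (by norm_num)]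
  norm_num

lemma Hm_mul_Hm : Hm * Hm = 1 := by
  have hM : (!![1, 1; 1, -1] : Matrix (Fin 2) (Fin 2) ℂ) * !![1, 1; 1, -1] = (2 : ℂ) • 1 := by
    ext i j; fin_cases i <;> fin_cases j <;>
      simp [Matrix.mul_apply, Fin.sum_univ_succ, Matrix.one_apply] <;> norm_num
  rw [Hm, smul_mul_assoc, mul_smul_comm, hM, smul_smul, smul_smul, hc2]
  norm_num

def Hunit : (Matrix (Fin 2) (Fin 2) ℂ)ˣ := ⟨Hm, Hm, Hm_mul_Hm, Hm_mul_Hm⟩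

lemma Hm_conj_smul_Zm (a : ℂ) : Hm * NormedSpace.exp (a • Zm) * Hm = NormedSpace.exp (a • Xm) := by
  have hM : (!![1, 1; 1, -1] : Matrix (Fin 2) (Fin 2) ℂ) * Zm * !![1, 1; 1, -1] = (2 : ℂ) • Xm := by
    ext i j; fin_cases i <;> fin_cases j <;>
      simp [Zm, Xm, Matrix.mul_apply, Fin.sum_univ_succ] <;> norm_num
  have key : Hm * (a • Zm) * Hm = a • Xm := by
    rw [Hm, smul_mul_assoc, mul_smul_comm, mul_smul_comm, smul_mul_assoc, smul_mul_assoc, hM,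
      smul_smul, smul_smul, smul_smul]
    rw [hc2]
    congr 1
    ring
  have h := Matrix.exp_units_conj Hunit (a • Zm)
  simp only [Hunit, Units.inv_mk] at h
  rw [key] at h
  rw [h]

/-- Concatenating three `J`-gates gives an Euler-form unitary:
`J_ξ J_ζ J_θ = H e^{iξZ} e^{iζX} e^{iθZ}`. -/
theorem Jgate_concat (θ ζ ξ : ℝ) :
    Jgate ξ * Jgate ζ * Jgate θ =
      Hm * NormedSpace.exp (((ξ : ℂ) * Complex.I) • Zm) *
        NormedSpace.exp (((ζ : ℂ) * Complex.I) • Xm) *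
        NormedSpace.exp (((θ : ℂ) * Complex.I) • Zm) := by
  simp only [Jgate]
  rw [← Hm_conj_smul_Zm (((ζ : ℂ) * Complex.I))]
  noncomm_ring
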